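/- Let Λ_s be the exterior algebra over ℂ on generators θ^μ_t (1 ≤ μ ≤ 2n, 1 ≤ t ≤ s), and set φ_{ts} = ∑_{μ,ν} θ^μ_t (η^{-1})_{μν} θ^ν_s where η is the standard symplectic matrix. Then each φ_{ts} is an even element of Λ_s, φ_{ts} = φ_{st}, and the φ_{tt} are nonzero with φ_{tt}^n ≠ 0 and φ_{tt}^{n+1} = 0. -/

import Mathlib

/-!
Under the block decomposition `Fin (2n) ≃ Fin n ⊕ Fin n`, `η` is `-J`, so `η⁻¹ = J` and
`φ_{tu} = ∑_k (θ^{n+k}_t θ^k_u - θ^k_t θ^{n+k}_u)`; anticommutation of the generators gives the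
symmetry. For `t = u` this is `-2 ∑_k x_k` with `x_k = θ^k_t θ^{n+k}_t`, even elements which
commute pairwise and square to zero, so `(∑ x_k)^n = n! ∏ x_k` and `(∑ x_k)^{n+1} = 0`. Finally
`∏ x_k` is, up to reordering into pairs, the wedge product of the `2n` linearly independent
vectors `e_{(μ,t)}`, hence nonzero.
-/

open ExteriorAlgebra

section SquareZero

variable {A : Type*} [Semiring A]

theorem Commute.add_pow_succ_of_mul_self_eq_zero {x y : A} (hxy : Commute x y) (hx : x * x = 0)
    (m : ℕ) : (x + y) ^ (m + 1) = y ^ (m + 1) + (m + 1) • (x * y ^ m) := by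
  induction m with
  | zero => simp [add_comm]
  | succ m ih =>
    have hxyx : x * y ^ m * x = 0 := by
      rw [mul_assoc, ← (hxy.pow_right m).eq, ← mul_assoc, hx, zero_mul]
    rw [pow_succ, ih, add_mul, mul_add, smul_mul_assoc, mul_add, hxyx, zero_add,
      ← (hxy.pow_right _).eq, ← pow_succ, mul_assoc, ← pow_succ, succ_nsmul _ (m + 1)]
    abel

namespace List

theorem sum_pow_length_succ_eq_zero {L : List A} (hL : L.Pairwise Commute)
    (hsq : ∀ a ∈ L, a * a = 0) : L.sum ^ (L.length + 1) = 0 := by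
  induction L with
  | nil => simp
  | cons a L ih =>
    rw [pairwise_cons] at hL
    have hS : L.sum ^ (L.length + 1) = 0 := ih hL.2 fun b hb => hsq b (mem_cons_of_mem a hb)
    rw [sum_cons, length_cons, (Commute.list_sum_right _ _ hL.1).add_pow_succ_of_mul_self_eq_zero
      (hsq a mem_cons_self), pow_succ, hS, zero_mul, mul_zero, smul_zero, add_zero]

theorem sum_pow_length {L : List A} (hL : L.Pairwise Commute) (hsq : ∀ a ∈ L, a * a = 0) :
    L.sum ^ L.length = L.length.factorial • L.prod := by
  induction L with
  | nil => simp
  | cons a L ih =>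
    rw [pairwise_cons] at hL
    have hsq' : ∀ b ∈ L, b * b = 0 := fun b hb => hsq b (mem_cons_of_mem a hb)
    rw [sum_cons, length_cons, (Commute.list_sum_right _ _ hL.1).add_pow_succ_of_mul_self_eq_zero
      (hsq a mem_cons_self), sum_pow_length_succ_eq_zero hL.2 hsq', zero_add, ih hL.2 hsq',
      mul_smul_comm, smul_smul, prod_cons, Nat.factorial_succ]

end List

end SquareZero

def symplecticIndex (n : ℕ) : Fin n ⊕ Fin n ≃ Fin (2 * n) :=
  finSumFinEquiv.trans (finCongr (two_mul n).symm)

@[simp] theorem symplecticIndex_inl_val {n : ℕ} (k : Fin n) :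
    (symplecticIndex n (.inl k) : ℕ) = k := rfl

@[simp] theorem symplecticIndex_inr_val {n : ℕ} (k : Fin n) :
    (symplecticIndex n (.inr k) : ℕ) = n + k := rfl

def symplecticMatrix (n : ℕ) (R : Type*) [CommRing R] : Matrix (Fin (2 * n)) (Fin (2 * n)) R :=
  Matrix.of fun μ ν => if (μ : ℕ) + n = ν then 1 else if (ν : ℕ) + n = μ then -1 else 0

section SymplecticMatrix

variable {n : ℕ} {R : Type*} [CommRing R]

theorem symplecticMatrix_eq_reindex :
    symplecticMatrix n R =
      Matrix.reindex (symplecticIndex n) (symplecticIndex n) (-Matrix.J (Fin n) R) := by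
  ext μ ν
  obtain ⟨i, rfl⟩ := (symplecticIndex n).surjective μ
  obtain ⟨j, rfl⟩ := (symplecticIndex n).surjective ν
  rcases i with k | k <;> rcases j with l | l <;>
    simp [symplecticMatrix, Matrix.J, Matrix.one_apply, Fin.ext_iff] <;> grind

theorem inv_symplecticMatrix :
    (symplecticMatrix n R)⁻¹ =
      Matrix.reindex (symplecticIndex n) (symplecticIndex n) (Matrix.J (Fin n) R) := by
  rw [symplecticMatrix_eq_reindex, Matrix.inv_reindex,
    Matrix.inv_eq_left_inv (by rw [mul_neg, Matrix.J_squared, neg_neg])]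

theorem sum_inv_symplecticMatrix_smul {V : Type*} [AddCommGroup V] [Module R V]
    (f : Fin (2 * n) → Fin (2 * n) → V) :
    ∑ μ, ∑ ν, (symplecticMatrix n R)⁻¹ μ ν • f μ ν =
      ∑ k, (f (symplecticIndex n (.inr k)) (symplecticIndex n (.inl k)) -
        f (symplecticIndex n (.inl k)) (symplecticIndex n (.inr k))) := by
  simp only [inv_symplecticMatrix, ← (symplecticIndex n).sum_comp, Matrix.reindex_apply,
    Matrix.submatrix_apply, Equiv.symm_apply_apply]
  simp [Fintype.sum_sum_type, Matrix.J, Matrix.one_apply, sub_eq_add_neg, Finset.sum_add_distrib]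

end SymplecticMatrix

namespace ExteriorAlgebra

section CommRing

variable {R M : Type*} [CommRing R] [AddCommGroup M] [Module R M]

theorem ι_mul_ι_anticomm (x y : M) : ι R x * ι R y = -(ι R y * ι R x) :=
  eq_neg_of_add_eq_zero_left (ι_add_mul_swap x y)

theorem commute_ι_mul_ι_ι (x y z : M) : Commute (ι R x * ι R y) (ι R z) := by
  rw [Commute, SemiconjBy, mul_assoc, ι_mul_ι_anticomm y z, mul_neg, ← mul_assoc,
    ι_mul_ι_anticomm x z, neg_mul, neg_neg, mul_assoc]

theorem commute_ι_mul_ι (x y z w : M) : Commute (ι R x * ι R y) (ι R z * ι R w) :=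
  (commute_ι_mul_ι_ι x y z).mul_right (commute_ι_mul_ι_ι x y w)

theorem ι_mul_ι_mul_self (x y : M) : ι R x * ι R y * (ι R x * ι R y) = 0 := by
  rw [← mul_assoc, (commute_ι_mul_ι_ι x y x).eq, mul_assoc, mul_assoc, ← mul_assoc (ι R x),
    ι_sq_zero, zero_mul]

theorem ιMulti_interleave {m : ℕ} (a b : Fin m → M) :
    ιMulti R (m * 2) (fun j => ![a, b] j.modNat j.divNat) =
      (List.ofFn fun k => ι R (a k) * ι R (b k)).prod := by
  rw [ιMulti_apply, List.ofFn_mul, List.prod_flatten, List.map_ofFn]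
  refine congrArg List.prod (List.ofFn_inj.mpr (funext fun k => ?_))
  have hdiv : ((k : ℕ) * 2 + 1) / 2 = k := by omega
  simp [Fin.divNat, Fin.modNat, List.ofFn_succ, hdiv]

theorem sum_ofFn_ι_mul_ι_pow {m : ℕ} (a b : Fin m → M) :
    (List.ofFn fun k => ι R (a k) * ι R (b k)).sum ^ m =
      m.factorial • (List.ofFn fun k => ι R (a k) * ι R (b k)).prod := by
  simpa using List.sum_pow_length (List.pairwise_ofFn.mpr fun _ _ _ => commute_ι_mul_ι _ _ _ _)
    (by simp [List.mem_ofFn, ι_mul_ι_mul_self])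

theorem sum_ofFn_ι_mul_ι_pow_succ {m : ℕ} (a b : Fin m → M) :
    (List.ofFn fun k => ι R (a k) * ι R (b k)).sum ^ (m + 1) = 0 := by
  simpa using List.sum_pow_length_succ_eq_zero
    (List.pairwise_ofFn.mpr fun _ _ _ => commute_ι_mul_ι _ _ _ _)
    (by simp [List.mem_ofFn, ι_mul_ι_mul_self])

variable (R) {n : ℕ}

noncomputable def symplecticPairing (x y : Fin (2 * n) → M) : ExteriorAlgebra R M :=
  ∑ μ, ∑ ν, (symplecticMatrix n R)⁻¹ μ ν • (ι R (x μ) * ι R (y ν))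

variable {R}

theorem symplecticPairing_mem (x y : Fin (2 * n) → M) :
    symplecticPairing R x y ∈ LinearMap.range (ι R (M := M)) * LinearMap.range (ι R (M := M)) :=
  Submodule.sum_mem _ fun _ _ => Submodule.sum_mem _ fun _ _ => Submodule.smul_mem _ _ <|
    Submodule.mul_mem_mul (LinearMap.mem_range_self _ _) (LinearMap.mem_range_self _ _)

theorem symplecticPairing_eq (x y : Fin (2 * n) → M) :
    symplecticPairing R x y =
      ∑ k, (ι R (x (symplecticIndex n (.inr k))) * ι R (y (symplecticIndex n (.inl k))) -
        ι R (x (symplecticIndex n (.inl k))) * ι R (y (symplecticIndex n (.inr k)))) :=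
  sum_inv_symplecticMatrix_smul _

theorem symplecticPairing_comm (x y : Fin (2 * n) → M) :
    symplecticPairing R x y = symplecticPairing R y x := by
  simp only [symplecticPairing_eq]
  refine Finset.sum_congr rfl fun k _ => ?_
  rw [ι_mul_ι_anticomm (y _), ι_mul_ι_anticomm (y _)]
  abel

theorem symplecticPairing_self (x : Fin (2 * n) → M) :
    symplecticPairing R x x = (-2 : R) • (List.ofFn fun k =>
      ι R (x (symplecticIndex n (.inl k))) * ι R (x (symplecticIndex n (.inr k)))).sum := by
  rw [symplecticPairing_eq, List.sum_ofFn, Finset.smul_sum]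
  refine Finset.sum_congr rfl fun k _ => ?_
  rw [ι_mul_ι_anticomm (x _)]
  module

theorem symplecticPairing_self_pow (x : Fin (2 * n) → M) :
    symplecticPairing R x x ^ n = ((-2 : R) ^ n * n.factorial) • (List.ofFn fun k =>
      ι R (x (symplecticIndex n (.inl k))) * ι R (x (symplecticIndex n (.inr k)))).prod := by
  rw [symplecticPairing_self, smul_pow, sum_ofFn_ι_mul_ι_pow, ← Nat.cast_smul_eq_nsmul R,
    smul_smul]

theorem symplecticPairing_self_pow_succ (x : Fin (2 * n) → M) :
    symplecticPairing R x x ^ (n + 1) = 0 := by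
  rw [symplecticPairing_self, smul_pow, sum_ofFn_ι_mul_ι_pow_succ, smul_zero]

end CommRing

-- At the identity embedding of `Fin m`, `ιMulti_family` is `ιMulti v` itself.
theorem ιMulti_ne_zero_of_linearIndependent {K E : Type*} [Field K] [AddCommGroup E] [Module K E]
    {m : ℕ} {v : Fin m → E} (hv : LinearIndependent K v) : ιMulti K m v ≠ 0 := by
  have h := (exteriorPower.ιMulti_family_linearIndependent_field (n := m) hv).ne_zero
    (Set.powersetCard.ofFinEmbEquiv (RelEmbedding.refl (· ≤ ·)))
  rw [exteriorPower.ιMulti_family, Equiv.symm_apply_apply] at h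
  exact fun h0 => h (Subtype.ext h0)

theorem prod_ofFn_ι_mul_ι_ne_zero {K E : Type*} [Field K] [AddCommGroup E] [Module K E] {m : ℕ}
    {a b : Fin m → E} (hab : LinearIndependent K (Sum.elim a b)) :
    (List.ofFn fun k => ι K (a k) * ι K (b k)).prod ≠ 0 := by
  let σ : Fin m × Fin 2 → Fin m ⊕ Fin m := fun p => ![Sum.inl, Sum.inr] p.2 p.1
  have hσ : σ.Injective := by
    rintro ⟨k, r⟩ ⟨l, s⟩ h
    fin_cases r <;> fin_cases s <;> simp_all [σ]
  have hw : (fun j : Fin (m * 2) => ![a, b] j.modNat j.divNat) =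
      Sum.elim a b ∘ σ ∘ finProdFinEquiv.symm := by
    funext j
    obtain ⟨r, hr⟩ : ∃ r, j.modNat = r := ⟨_, rfl⟩
    fin_cases r <;> simp [σ, finProdFinEquiv_symm_apply, hr]
  rw [← ιMulti_interleave]
  exact ιMulti_ne_zero_of_linearIndependent
    (hw ▸ hab.comp _ (hσ.comp finProdFinEquiv.symm.injective))

theorem symplecticPairing_self_pow_ne_zero {K E : Type*} [Field K] [CharZero K] [AddCommGroup E]
    [Module K E] {n : ℕ} {x : Fin (2 * n) → E} (hx : LinearIndependent K x) :
    symplecticPairing K x x ^ n ≠ 0 := by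
  rw [symplecticPairing_self_pow]
  refine smul_ne_zero (by simp [Nat.factorial_ne_zero]) (prod_ofFn_ι_mul_ι_ne_zero ?_)
  have hxe := hx.comp _ (symplecticIndex n).injective
  rwa [← Sum.elim_comp_inl_inr (x ∘ symplecticIndex n)] at hxe

end ExteriorAlgebra

/-- In the exterior algebra over `ℂ` on generators `θ^μ_t`
(`1 ≤ μ ≤ 2n`, `1 ≤ t ≤ s`), with `η` the standard symplectic matrix, the elements
`φ_{ts} = ∑_{μ,ν} θ^μ_t (η^{-1})_{μν} θ^ν_s` are even (products of two generators),
symmetric (`φ_{ts} = φ_{st}`), and satisfy `φ_{tt} ≠ 0`, `φ_{tt}^n ≠ 0`, `φ_{tt}^{n+1} = 0`. -/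
theorem phi_properties (n s : ℕ) (hn : 1 ≤ n)
    (η : Matrix (Fin (2 * n)) (Fin (2 * n)) ℂ)
    (hη : η = Matrix.of fun μ ν : Fin (2 * n) =>
      if (μ : ℕ) + n = (ν : ℕ) then (1 : ℂ)
      else if (ν : ℕ) + n = (μ : ℕ) then (-1 : ℂ) else 0)
    (θ : Fin (2 * n) → Fin s → ExteriorAlgebra ℂ (Fin (2 * n) × Fin s → ℂ))
    (hθ : ∀ μ t, θ μ t = ExteriorAlgebra.ι ℂ (Pi.single (μ, t) (1 : ℂ)))
    (φ : Fin s → Fin s → ExteriorAlgebra ℂ (Fin (2 * n) × Fin s → ℂ))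
    (hφ : ∀ t u : Fin s, φ t u = ∑ μ : Fin (2 * n), ∑ ν : Fin (2 * n),
      (η⁻¹ μ ν) • (θ μ t * θ ν u)) :
    (∀ t u : Fin s, φ t u ∈
        LinearMap.range (ExteriorAlgebra.ι ℂ (M := Fin (2 * n) × Fin s → ℂ)) *
          LinearMap.range (ExteriorAlgebra.ι ℂ (M := Fin (2 * n) × Fin s → ℂ))) ∧
      (∀ t u : Fin s, φ t u = φ u t) ∧
      (∀ t : Fin s, φ t t ≠ 0) ∧
      (∀ t : Fin s, φ t t ^ n ≠ 0) ∧
      (∀ t : Fin s, φ t t ^ (n + 1) = 0) := by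
  let x : Fin s → Fin (2 * n) → Fin (2 * n) × Fin s → ℂ := fun t μ => Pi.single (μ, t) 1
  have hφx : ∀ t u, φ t u = symplecticPairing ℂ (x t) (x u) := by
    have hη' : η = symplecticMatrix n ℂ := hη
    intro t u
    rw [hφ, hη', symplecticPairing]
    simp only [hθ, x]
  have hx : ∀ t, LinearIndependent ℂ (x t) := fun t => by
    have hb := (Pi.basisFun ℂ (Fin (2 * n) × Fin s)).linearIndependent.comp _
      (Prod.mk_left_injective t)
    simpa only [Function.comp_def, Pi.basisFun_apply] using hb
  have hpow : ∀ t, φ t t ^ n ≠ 0 := fun t => by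
    rw [hφx]
    exact symplecticPairing_self_pow_ne_zero (hx t)
  refine ⟨fun t u => by rw [hφx]; exact symplecticPairing_mem _ _,
    fun t u => by rw [hφx, hφx, symplecticPairing_comm],
    fun t h => hpow t (by rw [h, zero_pow (by omega)]), hpow,
    fun t => by rw [hφx, symplecticPairing_self_pow_succ]⟩
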